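/- There is a constant C > 0 such that for all t ≥ 0, the L²-norm in y of e^{ψ(t,y)}·∫_y^∞ (1-φ(t,y'))dy' over (0,∞) is bounded by C(1+t)^{3/4}, where ψ(t,y) = (1+y²)/(16(1+t)^γ) with γ ≥ 2 and φ(t,y) = Erf(y/(2√(t+1))). -/

import Mathlib

/-!
Write `u = 1 + t`. Since `γ ≥ 1`, the weight satisfies `e^ψ ≤ e^{1/16} e^{y²/(16u)}`. The
complementary error function has the Gaussian tail `1 - Erf x ≤ √2 e^{-x²/2}`, and splitting the
exponent of a Gaussian tail integral as `e^{-(c+d)z²} ≤ e^{-cx²} e^{-dz²}` for `z ≥ x` shows that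
`∫_y^∞ (1 - Erf (y'/(2√u))) dy' ≲ √u e^{-y²/(12u)}`. The decay rate `1/12` beats the growth `1/16`
of the weight, so the squared integrand is `≲ u e^{-y²/(24u)}`, whose integral is `≲ u^{3/2}`.
-/

open Real MeasureTheory Set

/-- The error function Erf(y) = (2/√π)∫₀^y e^{-z²} dz. -/
noncomputable def Erf (y : ℝ) : ℝ := (2 / Real.sqrt Real.pi) * ∫ z in (0:ℝ)..y, Real.exp (-z^2)

theorem one_sub_Erf_eq_integral_Ioi (x : ℝ) :
    1 - Erf x = 2 / √π * ∫ z in Ioi x, exp (-z ^ 2) := by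
  have hint : Integrable fun z : ℝ => exp (-z ^ 2) := by
    simpa using integrable_exp_neg_mul_sq one_pos
  have htotal : ∫ z in Ioi (0:ℝ), exp (-z ^ 2) = √π / 2 := by
    simpa using integral_gaussian_Ioi 1
  rw [Erf, ← intervalIntegral.integral_Ioi_sub_Ioi' hint.integrableOn hint.integrableOn, htotal]
  field_simp
  ring

theorem Erf_le_one (x : ℝ) : Erf x ≤ 1 := by
  have : 0 ≤ 1 - Erf x := by
    rw [one_sub_Erf_eq_integral_Ioi]
    exact mul_nonneg (by positivity) (setIntegral_nonneg measurableSet_Ioi fun z _ => by positivity)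
  linarith

theorem integral_Ioi_exp_neg_mul_sq_le {c d x : ℝ} (hc : 0 ≤ c) (hd : 0 < d) (hx : 0 ≤ x) :
    ∫ z in Ioi x, exp (-(c + d) * z ^ 2) ≤ exp (-c * x ^ 2) * (√(π / d) / 2) := by
  have hint : Integrable fun z : ℝ => exp (-c * x ^ 2) * exp (-d * z ^ 2) :=
    (integrable_exp_neg_mul_sq hd).const_mul _
  calc ∫ z in Ioi x, exp (-(c + d) * z ^ 2)
      ≤ ∫ z in Ioi x, exp (-c * x ^ 2) * exp (-d * z ^ 2) := by
        refine setIntegral_mono_on ?_ hint.integrableOn measurableSet_Ioi fun z hz => ?_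
        · exact ((integrable_exp_neg_mul_sq (by positivity)).integrableOn)
        rw [← exp_add]
        have : x ^ 2 ≤ z ^ 2 := pow_le_pow_left₀ hx (le_of_lt hz) 2
        gcongr
        nlinarith
    _ ≤ ∫ z in Ioi 0, exp (-c * x ^ 2) * exp (-d * z ^ 2) :=
        setIntegral_mono_set hint.integrableOn (.of_forall fun z => by positivity)
          (Ioi_subset_Ioi hx).eventuallyLE
    _ = exp (-c * x ^ 2) * (√(π / d) / 2) := by
        rw [integral_const_mul, integral_gaussian_Ioi]

theorem one_sub_Erf_le_sqrt_two_mul_exp {x : ℝ} (hx : 0 ≤ x) :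
    1 - Erf x ≤ √2 * exp (-x ^ 2 / 2) := by
  have htail := integral_Ioi_exp_neg_mul_sq_le (c := 1 / 2) (d := 1 / 2) (by norm_num)
    (by norm_num) hx
  rw [one_sub_Erf_eq_integral_Ioi]
  calc 2 / √π * ∫ z in Ioi x, exp (-z ^ 2)
      ≤ 2 / √π * (exp (-(1 / 2) * x ^ 2) * (√(π / (1 / 2)) / 2)) := by
        gcongr
        refine le_of_eq_of_le ?_ htail
        congr 1 with z
        ring_nf
    _ = √2 * exp (-x ^ 2 / 2) := by
        rw [show π / (1 / 2) = 2 * π by ring, sqrt_mul zero_le_two]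
        field_simp

theorem integral_Ioi_one_sub_Erf_le {u y : ℝ} (hu : 0 < u) (hy : 0 ≤ y) :
    ∫ y' in Ioi y, (1 - Erf (y' / (2 * √u))) ≤ √(12 * π * u) * exp (-y ^ 2 / (12 * u)) := by
  have hint : Integrable fun y' : ℝ => √2 * exp (-(1 / (12 * u) + 1 / (24 * u)) * y' ^ 2) :=
    (integrable_exp_neg_mul_sq (by positivity)).const_mul _
  have hpointwise : ∀ y' ∈ Ioi y,
      1 - Erf (y' / (2 * √u)) ≤ √2 * exp (-(1 / (12 * u) + 1 / (24 * u)) * y' ^ 2) := by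
    intro y' hy'
    have hy'0 : 0 ≤ y' := hy.trans (le_of_lt hy')
    refine (one_sub_Erf_le_sqrt_two_mul_exp (by positivity)).trans_eq ?_
    rw [div_pow, mul_pow, sq_sqrt hu.le]
    congr 2
    field_simp
    ring
  calc ∫ y' in Ioi y, (1 - Erf (y' / (2 * √u)))
      ≤ ∫ y' in Ioi y, √2 * exp (-(1 / (12 * u) + 1 / (24 * u)) * y' ^ 2) := by
        refine integral_mono_of_nonneg (.of_forall fun y' => sub_nonneg.2 (Erf_le_one _))
          hint.integrableOn ?_
        exact (ae_restrict_iff' measurableSet_Ioi).2 (.of_forall hpointwise)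
    _ ≤ √2 * (exp (-(1 / (12 * u)) * y ^ 2) * (√(π / (1 / (24 * u))) / 2)) := by
        rw [integral_const_mul]
        gcongr
        exact integral_Ioi_exp_neg_mul_sq_le (by positivity) (by positivity) hy
    _ = √(12 * π * u) * exp (-y ^ 2 / (12 * u)) := by
        have : √2 * √(π / (1 / (24 * u))) = 2 * √(12 * π * u) := by
          rw [← sqrt_mul zero_le_two, show 2 * (π / (1 / (24 * u))) = 2 ^ 2 * (12 * π * u) by
            field_simp; ring, sqrt_mul (by positivity), sqrt_sq zero_le_two]
        rw [show -(1 / (12 * u)) * y ^ 2 = -y ^ 2 / (12 * u) by ring]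
        linear_combination exp (-y ^ 2 / (12 * u)) / 2 * this

theorem exp_div_rpow_le {γ u : ℝ} (hγ : 1 ≤ γ) (hu : 1 ≤ u) (y : ℝ) :
    exp ((1 + y ^ 2) / (16 * u ^ γ)) ≤ exp (1 / 16) * exp (y ^ 2 / (16 * u)) := by
  have hu_le : u ≤ u ^ γ := self_le_rpow_of_one_le hu hγ
  rw [← exp_add]
  gcongr
  calc (1 + y ^ 2) / (16 * u ^ γ) ≤ (1 + y ^ 2) / (16 * u) := by gcongr
    _ = 1 / (16 * u) + y ^ 2 / (16 * u) := add_div _ _ _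
    _ ≤ 1 / 16 + y ^ 2 / (16 * u) := by gcongr; linarith

theorem sq_exp_mul_integral_Ioi_one_sub_Erf_le {γ u y : ℝ} (hγ : 1 ≤ γ) (hu : 1 ≤ u)
    (hy : 0 ≤ y) :
    (exp ((1 + y ^ 2) / (16 * u ^ γ)) * ∫ y' in Ioi y, (1 - Erf (y' / (2 * √u)))) ^ 2
      ≤ 12 * π * exp (1 / 8) * u * exp (-(1 / (24 * u)) * y ^ 2) := by
  have hu0 : 0 < u := one_pos.trans_le hu
  have hI : 0 ≤ ∫ y' in Ioi y, (1 - Erf (y' / (2 * √u))) :=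
    setIntegral_nonneg measurableSet_Ioi fun y' _ => sub_nonneg.2 (Erf_le_one _)
  calc _ ≤ (exp (1 / 16) * exp (y ^ 2 / (16 * u))
          * (√(12 * π * u) * exp (-y ^ 2 / (12 * u)))) ^ 2 := by
        gcongr
        exacts [exp_div_rpow_le hγ hu y, integral_Ioi_one_sub_Erf_le hu0 hy]
    _ = 12 * π * u * exp (2 * (1 / 16 + y ^ 2 / (16 * u) + -y ^ 2 / (12 * u))) := by
        have h := sq_sqrt (show 0 ≤ 12 * π * u by positivity)
        simp only [two_mul, exp_add]
        linear_combination (exp (1 / 16) * exp (y ^ 2 / (16 * u)) * exp (-y ^ 2 / (12 * u))) ^ 2 * h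
    _ = 12 * π * exp (1 / 8) * u * exp (-(1 / (24 * u)) * y ^ 2) := by
        rw [mul_right_comm _ (exp _), mul_assoc _ (exp _), ← exp_add]
        congr 2
        field_simp
        ring

theorem integral_sq_exp_mul_integral_Ioi_one_sub_Erf_le {γ u : ℝ} (hγ : 1 ≤ γ) (hu : 1 ≤ u) :
    ∫ y in Ioi 0, (exp ((1 + y ^ 2) / (16 * u ^ γ)) * ∫ y' in Ioi y, (1 - Erf (y' / (2 * √u)))) ^ 2
      ≤ 6 * π * exp (1 / 8) * √(24 * π) * u ^ ((3 : ℝ) / 2) := by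
  have hu0 : 0 < u := one_pos.trans_le hu
  have hint : Integrable fun y : ℝ => 12 * π * exp (1 / 8) * u * exp (-(1 / (24 * u)) * y ^ 2) :=
    (integrable_exp_neg_mul_sq (by positivity)).const_mul _
  calc _ ≤ ∫ y in Ioi 0, 12 * π * exp (1 / 8) * u * exp (-(1 / (24 * u)) * y ^ 2) := by
        refine integral_mono_of_nonneg (.of_forall fun y => sq_nonneg _) hint.integrableOn ?_
        exact (ae_restrict_iff' measurableSet_Ioi).2 <| .of_forall fun y hy =>
          sq_exp_mul_integral_Ioi_one_sub_Erf_le hγ hu (le_of_lt hy)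
    _ = 6 * π * exp (1 / 8) * √(24 * π) * u ^ ((3 : ℝ) / 2) := by
        rw [integral_const_mul, integral_gaussian_Ioi, show π / (1 / (24 * u)) = 24 * π * u by
          field_simp, sqrt_mul (by positivity), show (3 : ℝ) / 2 = 1 + 1 / 2 by norm_num,
          rpow_add hu0, rpow_one, ← sqrt_eq_rpow]
        ring

/-- With ψ(t,y) = (1+y²)/(16(1+t)^γ), γ ≥ 2, and φ(t,y) = Erf(y/(2√(t+1))),
there is C > 0 with
‖e^{ψ(t,·)} ∫_·^∞(1-φ(t,y'))dy'‖_{L²(0,∞)} ≤ C (1+t)^{3/4} for all t ≥ 0. -/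
theorem stmt11 (γ : ℝ) (hγ : 2 ≤ γ) :
    ∃ C > (0:ℝ), ∀ t ≥ (0:ℝ),
      (∫ y in Set.Ioi (0:ℝ),
          (Real.exp ((1 + y ^ 2) / (16 * (1 + t) ^ γ))
              * ∫ y' in Set.Ioi y, (1 - Erf (y' / (2 * Real.sqrt (t + 1))))) ^ 2)
          ^ ((1:ℝ) / 2)
        ≤ C * (1 + t) ^ ((3:ℝ) / 4) := by
  set K := 6 * π * exp (1 / 8) * √(24 * π)
  refine ⟨K ^ ((1 : ℝ) / 2), by positivity, fun t ht => ?_⟩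
  have hL2 := integral_sq_exp_mul_integral_Ioi_one_sub_Erf_le (γ := γ) (u := 1 + t)
    (by linarith) (by linarith)
  rw [add_comm t 1]
  calc _ ≤ (K * (1 + t) ^ ((3 : ℝ) / 2)) ^ ((1 : ℝ) / 2) :=
        rpow_le_rpow (integral_nonneg fun _ => sq_nonneg _) hL2 (by norm_num)
    _ = K ^ ((1 : ℝ) / 2) * (1 + t) ^ ((3 : ℝ) / 4) := by
        rw [mul_rpow (by positivity) (by positivity), ← rpow_mul (by linarith)]
        norm_num
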